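/- Let n ≥ 1 and let ρ : ℝ → ℝ be a measurable function such that z ↦ z^k ρ(z) is Lebesgue integrable on ℝ for all 0 ≤ k ≤ 2n. Set μ_k = ∫_ℝ z^k ρ(z) dz and D_n = det(μ_{i+j})_{0≤i,j≤n−1}, and define p_n(z) as the determinant of the (n+1)×(n+1) matrix whose entry in row i (0 ≤ i ≤ n) and column j is μ_{i+j} for 0 ≤ j ≤ n−1 and z^i for j = n. Then for every z ∈ ℝ, n! · p_n(z) = ∫_{ℝ^n} Δ_n(u)^2 ∏_{k=1}^n (z − u_k) ρ(u_k) du_1 ⋯ du_n (Heine's formula for orthogonal polynomials; when D_n ≠ 0, p_n/D_n is the monic orthogonal polynomial of degree n for the weight ρ). -/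

import Mathlib

/-!
With `V` the Vandermonde matrix, `Δ(u)² ∏ₖ (z - u k) = det V(u) · det V(u, z)`. Expanding
`det V(u)` by Leibniz and absorbing each monomial `∏ₖ u k ^ σ k · ρ (u k)` into the columns of
`V(u, z)ᵀ` writes the integrand as `∑ σ, sgn σ · det C_σ(u)`, where the `k`-th column of
`C_σ(u)` depends on `u k` alone and the last column is `(z ^ i)ᵢ`. Such a determinant can be
integrated column by column (Fubini on each Leibniz term); this yields the bordered Hankel matrix
with its first `n` columns permuted by `σ`, so every `σ` contributes `sgn σ ² = 1` times the
bordered Hankel determinant.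
-/

open MeasureTheory Finset Equiv Matrix

theorem Fin.prod_Ioi_castSucc {M : Type*} [CommMonoid M] {n : ℕ} (g : Fin (n + 1) → M)
    (i : Fin n) :
    ∏ j ∈ Ioi i.castSucc, g j = (∏ j ∈ Ioi i, g j.castSucc) * g (Fin.last n) := by
  rw [Ioi_eq_Ioc, Fin.top_eq_last, ← Ioo_insert_right (Fin.castSucc_lt_last i),
    prod_insert right_notMem_Ioo, ← Fin.map_castSuccEmb_Ioi, prod_map, mul_comm]
  rfl

namespace Matrix

variable {R : Type*} [CommRing R] {n : ℕ}

theorem det_vandermonde_snoc (u : Fin n → R) (z : R) :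
    (vandermonde (Fin.snoc u z : Fin (n + 1) → R)).det =
      (vandermonde u).det * ∏ k, (z - u k) := by
  have hlast : Ioi (Fin.last n) = ∅ := Ioi_top
  simp only [det_vandermonde, Fin.prod_univ_castSucc, Fin.prod_Ioi_castSucc, Fin.snoc_castSucc,
    Fin.snoc_last, hlast, prod_empty, mul_one, prod_mul_distrib]

theorem det_of_snoc (w : Fin (n + 1) → Fin n → R) (v : Fin (n + 1) → R) :
    (of fun i => (Fin.snoc (w i) (v i) : Fin (n + 1) → R)).det =
      ∑ τ : Perm (Fin (n + 1)),
        (Perm.sign τ : R) * ((∏ k, w (τ k.castSucc) k) * v (τ (Fin.last n))) := by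
  simp only [det_apply', of_apply, Fin.prod_univ_castSucc, Fin.snoc_castSucc, Fin.snoc_last]

theorem sum_sign_mul_det_of_snoc_comp_perm (A : Fin (n + 1) → Fin n → R)
    (v : Fin (n + 1) → R) :
    ∑ σ : Perm (Fin n), (Perm.sign σ : R) *
        (of fun i => (Fin.snoc (fun k => A i (σ k)) (v i) : Fin (n + 1) → R)).det =
      n.factorial * (of fun i => (Fin.snoc (A i) (v i) : Fin (n + 1) → R)).det := by
  have hperm (σ : Perm (Fin n)) :
      (of fun i => (Fin.snoc (fun k => A i (σ k)) (v i) : Fin (n + 1) → R)) =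
        (of fun i => (Fin.snoc (A i) (v i) : Fin (n + 1) → R)).submatrix id
          (σ.viaFintypeEmbedding Fin.castSuccEmb) := by
    ext i j
    induction j using Fin.lastCases with
    | last =>
      have hlast : Fin.last n ∉ Set.range Fin.castSuccEmb := by
        rintro ⟨k, hk⟩
        exact Fin.castSucc_ne_last k hk
      rw [submatrix_apply, Perm.viaFintypeEmbedding_apply_notMem_range (h := hlast)]
      simp
    | cast k =>
      rw [submatrix_apply, ← Fin.coe_castSuccEmb, Perm.viaFintypeEmbedding_apply_image]
      simp
  simp only [hperm, det_permute', Perm.viaFintypeEmbedding_sign, ← mul_assoc, ← Int.cast_mul,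
    ← Units.val_mul, Int.units_mul_self, Units.val_one, Int.cast_one, one_mul, sum_const,
    card_univ, Fintype.card_perm, Fintype.card_fin, nsmul_eq_mul]

theorem det_vandermonde_mul_det_vandermonde_snoc (u : Fin n → R) (z : R) (w : Fin n → R) :
    (vandermonde u).det * (vandermonde (Fin.snoc u z : Fin (n + 1) → R)).det * ∏ k, w k =
      ∑ σ : Perm (Fin n), (Perm.sign σ : R) *
        (of fun i : Fin (n + 1) =>
          (Fin.snoc (fun k => u k ^ ((i : ℕ) + σ k) * w k) (z ^ (i : ℕ)) :
            Fin (n + 1) → R)).det := by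
  have hscale (σ : Perm (Fin n)) :
      (vandermonde (Fin.snoc u z : Fin (n + 1) → R)).det * ∏ k, (u k ^ (σ k : ℕ) * w k) =
        (of fun i : Fin (n + 1) =>
          (Fin.snoc (fun k => u k ^ ((i : ℕ) + σ k) * w k) (z ^ (i : ℕ)) :
            Fin (n + 1) → R)).det := by
    have hw : ∏ k, (u k ^ (σ k : ℕ) * w k) =
        ∏ j, (Fin.snoc (fun k => u k ^ (σ k : ℕ) * w k) 1 : Fin (n + 1) → R) j := by
      simp only [Fin.prod_univ_castSucc, Fin.snoc_castSucc, Fin.snoc_last, mul_one]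
    rw [← det_transpose, mul_comm, hw, ← det_mul_row]
    congr 1
    ext i j
    induction j using Fin.lastCases with
    | last => simp
    | cast k =>
      simp only [transpose_apply, vandermonde_apply, of_apply, Fin.snoc_castSucc, pow_add]
      ring
  rw [← det_transpose, det_apply', sum_mul, sum_mul]
  refine sum_congr rfl fun σ _ => ?_
  rw [← hscale σ]
  simp only [transpose_apply, vandermonde_apply, prod_mul_distrib]
  ring

theorem of_ite_lt_eq_of_snoc {β : Type*} (a : Fin (n + 1) → ℕ → β) (v : Fin (n + 1) → β) :
    (of fun i j : Fin (n + 1) => if (j : ℕ) < n then a i j else v i) =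
      of fun i => (Fin.snoc (fun k : Fin n => a i k) (v i) : Fin (n + 1) → β) := by
  ext i j
  induction j using Fin.lastCases with
  | last => simp
  | cast k => simp

end Matrix

section Integral

variable {𝕜 α : Type*} [RCLike 𝕜] [MeasurableSpace α] {ν : Measure α} [SigmaFinite ν] {n : ℕ}

theorem integrable_det_of_snoc {F : Fin (n + 1) → Fin n → α → 𝕜}
    (hF : ∀ i k, Integrable (F i k) ν) (v : Fin (n + 1) → 𝕜) :
    Integrable (fun u : Fin n → α =>
        (of fun i => (Fin.snoc (fun k => F i k (u k)) (v i) : Fin (n + 1) → 𝕜)).det)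
      (Measure.pi fun _ => ν) := by
  simp only [det_of_snoc]
  exact integrable_finsetSum _ fun τ _ =>
    ((Integrable.fintype_prod fun k => hF _ k).mul_const _).const_mul _

theorem integral_det_of_snoc {F : Fin (n + 1) → Fin n → α → 𝕜}
    (hF : ∀ i k, Integrable (F i k) ν) (v : Fin (n + 1) → 𝕜) :
    ∫ u, (of fun i => (Fin.snoc (fun k => F i k (u k)) (v i) : Fin (n + 1) → 𝕜)).det
        ∂(Measure.pi fun _ => ν) =
      (of fun i => (Fin.snoc (fun k => ∫ t, F i k t ∂ν) (v i) : Fin (n + 1) → 𝕜)).det := by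
  simp only [det_of_snoc]
  rw [integral_finsetSum _ fun τ _ =>
    ((Integrable.fintype_prod fun k => hF _ k).mul_const _).const_mul _]
  simp only [integral_const_mul, integral_mul_const, integral_fintype_prod_eq_prod]

end Integral

theorem heine_formula_orthogonal_polynomials
    (n : ℕ) (ρ : ℝ → ℝ)
    (hint : ∀ k : ℕ, k ≤ 2 * n → Integrable (fun z : ℝ => z ^ k * ρ z))
    (z : ℝ) :
    (n.factorial : ℝ) *
        Matrix.det (Matrix.of fun i j : Fin (n + 1) =>
          if (j : ℕ) < n then ∫ u : ℝ, u ^ ((i : ℕ) + (j : ℕ)) * ρ u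
          else z ^ (i : ℕ))
      = ∫ u : Fin n → ℝ,
          (∏ j : Fin n, ∏ k ∈ Finset.Ioi j, (u k - u j)) ^ 2 *
            ∏ k : Fin n, ((z - u k) * ρ (u k)) := by
  have hF (σ : Perm (Fin n)) (i : Fin (n + 1)) (k : Fin n) :
      Integrable (fun t : ℝ => t ^ ((i : ℕ) + σ k) * ρ t) :=
    hint _ (by omega)
  calc _ = ∑ σ : Perm (Fin n), (Perm.sign σ : ℝ) * det (of fun i : Fin (n + 1) =>
          (Fin.snoc (fun k => ∫ t : ℝ, t ^ ((i : ℕ) + σ k) * ρ t) (z ^ (i : ℕ)) :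
            Fin (n + 1) → ℝ)) := by
        rw [of_ite_lt_eq_of_snoc (fun i m => ∫ u : ℝ, u ^ ((i : ℕ) + m) * ρ u)
          fun i => z ^ (i : ℕ), ← sum_sign_mul_det_of_snoc_comp_perm]
    _ = ∫ u : Fin n → ℝ, ∑ σ : Perm (Fin n), (Perm.sign σ : ℝ) * det (of fun i : Fin (n + 1) =>
          (Fin.snoc (fun k => u k ^ ((i : ℕ) + σ k) * ρ (u k)) (z ^ (i : ℕ)) :
            Fin (n + 1) → ℝ)) := by
        rw [volume_pi, integral_finsetSum _ fun σ _ =>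
          (integrable_det_of_snoc (hF σ) _).const_mul _]
        simp only [integral_const_mul, ← integral_det_of_snoc (hF _)]
    _ = _ := by
        congr 1
        funext u
        rw [← det_vandermonde_mul_det_vandermonde_snoc, det_vandermonde_snoc, det_vandermonde,
          prod_mul_distrib]
        ring
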